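/- arXiv:2410.02407 — 2 statements merged into one kernel-verified Lean document; each statement's English description precedes it below -/
import Mathlib

section
/- Suppose d is odd. Let p ≠ q in ZMod d, let a, b ∈ ZMod d, and let v, w be N-qudit vectors with Z̄ v = ζ^a v and Z̄ w = ζ^b w. If ⟨v| S~^(p,q) |w⟩ = 0, then ⟨v| A~^(p,q) |w⟩ = 0. -/
open Matrix Complex Finset

/-- ζ = exp(2πi/d). -/
noncomputable def zeta (d : ℕ) : ℂ := Complex.exp (2 * Real.pi * Complex.I / d)

/-- The shift matrix X = Σ_p |p+1⟩⟨p|. -/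
noncomputable def shiftX (d : ℕ) [NeZero d] : Matrix (ZMod d) (ZMod d) ℂ :=
  ∑ p : ZMod d, Matrix.single (p + 1) p 1

/-- The clock matrix Z = Σ_p ζ^p |p⟩⟨p|. -/
noncomputable def clockZ (d : ℕ) [NeZero d] : Matrix (ZMod d) (ZMod d) ℂ :=
  ∑ p : ZMod d, Matrix.single p p (zeta d ^ p.val)

/-- S^(j,k) = |j⟩⟨k| + |k⟩⟨j|. -/
noncomputable def Smat (d : ℕ) (j k : ZMod d) : Matrix (ZMod d) (ZMod d) ℂ :=
  Matrix.single j k 1 + Matrix.single k j 1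

/-- A^(j,k) = −i|j⟩⟨k| + i|k⟩⟨j|. -/
noncomputable def Amat (d : ℕ) (j k : ZMod d) : Matrix (ZMod d) (ZMod d) ℂ :=
  (-Complex.I) • Matrix.single j k 1 + Complex.I • Matrix.single k j 1

/-- D^(ℓ) = |ℓ⟩⟨ℓ| − |ℓ+1⟩⟨ℓ+1|. -/
noncomputable def Dmat (d : ℕ) (ℓ : ZMod d) : Matrix (ZMod d) (ZMod d) ℂ :=
  Matrix.single ℓ ℓ 1 - Matrix.single (ℓ + 1) (ℓ + 1) 1

/-- M acting at site i of an N-qudit system. -/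
noncomputable def site (d N : ℕ) [NeZero d] (M : Matrix (ZMod d) (ZMod d) ℂ) (i : Fin N) :
    Matrix (Fin N → ZMod d) (Fin N → ZMod d) ℂ :=
  Matrix.of fun f g =>
    M (f i) (g i) * ∏ j ∈ Finset.univ.erase i, (if f j = g j then (1 : ℂ) else 0)

/-- The collective operator M~ = Σ_i M_[i]. -/
noncomputable def coll (d N : ℕ) [NeZero d] (M : Matrix (ZMod d) (ZMod d) ℂ) :
    Matrix (Fin N → ZMod d) (Fin N → ZMod d) ℂ :=
  ∑ i : Fin N, site d N M i

/-- The N-fold tensor power of a d×d matrix. -/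
noncomputable def tpow (d N : ℕ) [NeZero d] (M : Matrix (ZMod d) (ZMod d) ℂ) :
    Matrix (Fin N → ZMod d) (Fin N → ZMod d) ℂ :=
  Matrix.of fun f g => ∏ i : Fin N, M (f i) (g i)

/-- Inner product of N-qudit vectors, conjugate-linear in the first argument. -/
noncomputable def qinner (d N : ℕ) [NeZero d] (v w : (Fin N → ZMod d) → ℂ) : ℂ :=
  ∑ f : Fin N → ZMod d, star (v f) * w f

/-- A content u is admissible if all entries are nonnegative and they sum to N. -/
def admissible (d N : ℕ) [NeZero d] (u : ZMod d → ℤ) : Prop :=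
  (∀ k, 0 ≤ u k) ∧ ∑ k : ZMod d, u k = (N : ℤ)

/-- The Dicke vector |S_u⟩: sum of standard basis vectors over all f with |f⁻¹{k}| = u_k. -/
noncomputable def dicke (d N : ℕ) [NeZero d] (u : ZMod d → ℤ) : (Fin N → ZMod d) → ℂ :=
  fun f =>
    if ∀ k : ZMod d, ((Finset.univ.filter fun i => f i = k).card : ℤ) = u k then 1 else 0

/-- The weight Σ_{m=0}^{d−1} m·u_m of a content. -/
def cweight (d : ℕ) (u : ZMod d → ℤ) : ℤ :=
  ∑ m ∈ Finset.range d, (m : ℤ) * u ((m : ℕ) : ZMod d)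

/-- The code word |0̄⟩ determined by coefficients α. -/
noncomputable def codeZero (d N : ℕ) [NeZero d] (α : (ZMod d → ℤ) →₀ ℂ) :
    (Fin N → ZMod d) → ℂ :=
  α.sum fun u c => c • dicke d N u

/-- The code word |k̄⟩ = X̄^k |0̄⟩. -/
noncomputable def codeword (d N : ℕ) [NeZero d] (α : (ZMod d → ℤ) →₀ ℂ) (k : ZMod d) :
    (Fin N → ZMod d) → ℂ :=
  (tpow d N (shiftX d)) ^ k.val *ᵥ codeZero d N α

/-- Sparseness of the code determined by α. -/
def sparse (d : ℕ) [NeZero d] (α : (ZMod d → ℤ) →₀ ℂ) : Prop :=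
  ∀ u ∈ α.support, ∀ u' ∈ α.support, ∀ δ : ZMod d,
    (u, δ) ≠ (u', (0 : ZMod d)) → 4 < ∑ ξ : ZMod d, |u ξ - u' (ξ + δ)|


/-! `Z̄` is diagonal, and the collective operator of `|r⟩⟨s|` multiplies `Z̄`-eigenvalues by
`ζ^r / ζ^s`, so `⟨v|(|r⟩⟨s|)~|w⟩` vanishes unless `a + s = r + b`. Write `S~ = B + C` and
`A~ = -iB + iC` with `B, C` the collective operators of `|p⟩⟨q|` and `|q⟩⟨p|`. Both selection
rules `a + q = p + b` and `a + p = q + b` together force `2p = 2q`, impossible for odd `d`; so one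
of `⟨v|B|w⟩, ⟨v|C|w⟩` vanishes, then the other does because their sum `⟨v|S~|w⟩` is zero, and
hence so does `⟨v|A~|w⟩`. -/

section SelectionRule

variable {ι K : Type*} [Fintype ι] [DecidableEq ι] [Field K] [StarRing K]

lemma star_dotProduct_diagonal_mulVec {δ v : ι → K} {c : K} (hv : diagonal δ *ᵥ v = c • v)
    (x : ι → K) : star v ⬝ᵥ (diagonal δ *ᵥ x) = c * (star v ⬝ᵥ x) := by
  simp only [dotProduct, mulVec_diagonal, Finset.mul_sum]
  refine Finset.sum_congr rfl fun f _ => ?_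
  have hvf : δ f * v f = c * v f := by simpa [mulVec_diagonal] using congrFun hv f
  rcases eq_or_ne (v f) 0 with h0 | h0
  · simp [h0]
  · rw [mul_right_cancel₀ h0 hvf, Pi.star_apply]; ring

lemma mul_eq_mul_of_star_dotProduct_mulVec_ne_zero {δ v w : ι → K} {T : Matrix ι ι K}
    {c c' l m : K} (hv : diagonal δ *ᵥ v = l • v) (hw : diagonal δ *ᵥ w = m • w)
    (hT : c • (diagonal δ * T) = c' • (T * diagonal δ)) (h : star v ⬝ᵥ (T *ᵥ w) ≠ 0) :
    c * l = c' * m := by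
  have key := congrArg (fun M => star v ⬝ᵥ (M *ᵥ w)) hT
  simp only [smul_mulVec, ← mulVec_mulVec, hw, mulVec_smul, dotProduct_smul,
    star_dotProduct_diagonal_mulVec hv, smul_eq_mul] at key
  exact mul_right_cancel₀ h (by linear_combination key)

end SelectionRule

lemma zeta_isPrimitiveRoot (d : ℕ) [NeZero d] : IsPrimitiveRoot (zeta d) d :=
  Complex.isPrimitiveRoot_exp d (NeZero.ne d)

section Qudit

variable {d N : ℕ} [NeZero d]

lemma zeta_pow_eq_zeta_pow_iff {m n : ℕ} : zeta d ^ m = zeta d ^ n ↔ (m : ZMod d) = n := by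
  rw [((zeta_isPrimitiveRoot d).isOfFinOrder (NeZero.ne d)).pow_eq_pow_iff_modEq,
    ← (zeta_isPrimitiveRoot d).eq_orderOf, ZMod.natCast_eq_natCast_iff]

lemma clockZ_apply (j k : ZMod d) : clockZ d j k = if j = k then zeta d ^ j.val else 0 := by
  simp only [clockZ, Matrix.sum_apply, single_apply]
  rw [Finset.sum_eq_single j]
  · by_cases h : j = k <;> simp [h]
  · intro p _ hp; exact if_neg fun h => hp h.1
  · simp

lemma tpow_clockZ : tpow d N (clockZ d) = diagonal fun f => ∏ i, zeta d ^ (f i).val := by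
  ext f g
  by_cases h : f = g
  · subst h; simp [tpow, clockZ_apply]
  · obtain ⟨i, hi⟩ := Function.ne_iff.mp h
    simp only [tpow, of_apply, diagonal_apply_ne _ h]
    exact Finset.prod_eq_zero (Finset.mem_univ i) (by simp [clockZ_apply, hi])

lemma qinner_eq_star_dotProduct (v w : (Fin N → ZMod d) → ℂ) : qinner d N v w = star v ⬝ᵥ w :=
  rfl

lemma site_add (M M' : Matrix (ZMod d) (ZMod d) ℂ) (i : Fin N) :
    site d N (M + M') i = site d N M i + site d N M' i := by
  ext f g; simp [site, add_mul]

lemma site_smul (c : ℂ) (M : Matrix (ZMod d) (ZMod d) ℂ) (i : Fin N) :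
    site d N (c • M) i = c • site d N M i := by
  ext f g; simp [site, mul_assoc]

lemma coll_add (M M' : Matrix (ZMod d) (ZMod d) ℂ) :
    coll d N (M + M') = coll d N M + coll d N M' := by
  simp [coll, site_add, Finset.sum_add_distrib]

lemma coll_smul (c : ℂ) (M : Matrix (ZMod d) (ZMod d) ℂ) :
    coll d N (c • M) = c • coll d N M := by
  simp [coll, site_smul, Finset.smul_sum]

lemma site_single_apply_ne_zero {r s : ZMod d} {i : Fin N} {f g : Fin N → ZMod d}
    (h : site d N (single r s 1) i f g ≠ 0) : f i = r ∧ g i = s ∧ ∀ j ≠ i, f j = g j := by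
  simp only [site, of_apply, single_apply] at h
  refine ⟨?_, ?_, fun j hj => ?_⟩
  · by_contra hf; simp [Ne.symm hf] at h
  · by_contra hg; simp [Ne.symm hg] at h
  · by_contra hfg
    exact h (mul_eq_zero_of_right _ (Finset.prod_eq_zero (by simpa using hj) (if_neg hfg)))

lemma smul_tpow_clockZ_mul_coll_single (r s : ZMod d) :
    zeta d ^ s.val • (tpow d N (clockZ d) * coll d N (single r s 1)) =
      zeta d ^ r.val • (coll d N (single r s 1) * tpow d N (clockZ d)) := by
  rw [tpow_clockZ]
  ext f g
  simp only [Matrix.smul_apply, smul_eq_mul, diagonal_mul, mul_diagonal, coll, Matrix.sum_apply,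
    Finset.mul_sum, Finset.sum_mul]
  refine Finset.sum_congr rfl fun i _ => ?_
  by_cases hz : site d N (single r s 1) i f g = 0
  · simp [hz]
  obtain ⟨hf, hg, hfg⟩ := site_single_apply_ne_zero hz
  rw [← Finset.mul_prod_erase _ _ (Finset.mem_univ i),
    ← Finset.mul_prod_erase _ (fun j => zeta d ^ (g j).val) (Finset.mem_univ i), hf, hg,
    Finset.prod_congr rfl fun j hj => by rw [hfg j (Finset.ne_of_mem_erase hj)]]
  ring

lemma qinner_coll_single_mulVec_eq_zero {r s a b : ZMod d} {v w : (Fin N → ZMod d) → ℂ}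
    (hv : tpow d N (clockZ d) *ᵥ v = zeta d ^ a.val • v)
    (hw : tpow d N (clockZ d) *ᵥ w = zeta d ^ b.val • w) (hab : s + a ≠ r + b) :
    qinner d N v (coll d N (single r s 1) *ᵥ w) = 0 := by
  by_contra h
  have hT := smul_tpow_clockZ_mul_coll_single (N := N) r s
  rw [tpow_clockZ] at hv hw hT
  have key := mul_eq_mul_of_star_dotProduct_mulVec_ne_zero hv hw hT h
  rw [← pow_add, ← pow_add, zeta_pow_eq_zeta_pow_iff] at key
  push_cast [ZMod.natCast_val, ZMod.cast_id] at key
  exact hab key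

end Qudit

theorem stmt12_general (d N : ℕ) [NeZero d] (hodd : Odd d)
    (p q : ZMod d) (hpq : p ≠ q) (a b : ZMod d)
    (v w : (Fin N → ZMod d) → ℂ)
    (hv : tpow d N (clockZ d) *ᵥ v = zeta d ^ a.val • v)
    (hw : tpow d N (clockZ d) *ᵥ w = zeta d ^ b.val • w)
    (hS : qinner d N v (coll d N (Smat d p q) *ᵥ w) = 0) :
    qinner d N v (coll d N (Amat d p q) *ᵥ w) = 0 := by
  set x := qinner d N v (coll d N (single p q 1) *ᵥ w)
  set y := qinner d N v (coll d N (single q p 1) *ᵥ w)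
  have hxy : x + y = 0 := by
    rwa [Smat, coll_add, add_mulVec, qinner_eq_star_dotProduct, dotProduct_add] at hS
  have htwo : IsUnit (2 : ZMod d) := by
    simpa using (ZMod.isUnit_iff_coprime 2 d).mpr (Nat.coprime_two_left.mpr hodd)
  have hsel : q + a ≠ p + b ∨ p + a ≠ q + b := by
    by_contra! h
    exact hpq (htwo.mul_left_cancel (by linear_combination h.2 - h.1))
  have hzero : x = 0 ∧ y = 0 := by
    rcases hsel with h | h
    · have hx0 : x = 0 := qinner_coll_single_mulVec_eq_zero hv hw h
      exact ⟨hx0, by linear_combination hxy - hx0⟩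
    · have hy0 : y = 0 := qinner_coll_single_mulVec_eq_zero hv hw h
      exact ⟨by linear_combination hxy - hy0, hy0⟩
  rw [Amat, coll_add, coll_smul, coll_smul, add_mulVec, smul_mulVec, smul_mulVec,
    qinner_eq_star_dotProduct, dotProduct_add, dotProduct_smul, dotProduct_smul]
  simp [← qinner_eq_star_dotProduct, x, y, hzero]

theorem stmt12 (d N : ℕ) [NeZero d] (hd : 2 ≤ d) (hodd : Odd d) (hN : 1 ≤ N)
    (p q : ZMod d) (hpq : p ≠ q) (a b : ZMod d)
    (v w : (Fin N → ZMod d) → ℂ)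
    (hv : tpow d N (clockZ d) *ᵥ v = zeta d ^ a.val • v)
    (hw : tpow d N (clockZ d) *ᵥ w = zeta d ^ b.val • w)
    (hS : qinner d N v (coll d N (Smat d p q) *ᵥ w) = 0) :
    qinner d N v (coll d N (Amat d p q) *ᵥ w) = 0 :=
  stmt12_general d N hodd p q hpq a b v w hv hw hS
end

section
/- Let v be a permutation-invariant N-qudit vector. Then ⟨v| D~^(ℓ) |v⟩ = 0 for every ℓ ∈ ZMod d. -/
/-! A permutation-invariant vector depends only on the content of the basis label,
`v f = β (content f)`, and `β` is invariant under relabelling the alphabet; hence `v` is unchanged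
when the transposition `τ = (ℓ ℓ+1)` is applied at every site. The collective operator
`D~^(ℓ)` is diagonal in the standard basis with eigenvalue `#f⁻¹{ℓ} - #f⁻¹{ℓ+1}` at `f`, which
`τ` negates. Reindexing the sum `⟨v|D~^(ℓ)|v⟩` by `τ` therefore shows that it equals its own
negative. -/

open Matrix Complex Finset

section Content

variable {ι α : Type*} [Fintype ι] [DecidableEq α]

def content (f : ι → α) (k : α) : ℤ := #{i | f i = k}

theorem content_comp_equiv (π : α ≃ α) (f : ι → α) : content (π ∘ f) = content f ∘ π.symm := by
  ext k
  simp only [content, Function.comp_apply, ← Equiv.eq_symm_apply]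

end Content

theorem Fintype.sum_eq_zero_of_comp_equiv_eq_neg {α R : Type*} [Fintype α] [NonAssocRing R]
    [NoZeroDivisors R] [CharZero R] (σ : α ≃ α) (F : α → R) (hF : ∀ a, F (σ a) = -F a) :
    ∑ a, F a = 0 := by
  rw [← CharZero.eq_neg_self_iff]
  calc ∑ a, F a = ∑ a, F (σ a) := (σ.sum_comp F).symm
    _ = -∑ a, F a := by simp only [hF, sum_neg_distrib]

theorem Dmat_eq_diagonal {d : ℕ} (ℓ : ZMod d) :
    Dmat d ℓ = diagonal (Pi.single ℓ 1 - Pi.single (ℓ + 1) 1) := by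
  rw [Dmat, ← diagonal_single, ← diagonal_single, diagonal_sub]
  rfl

variable {d N : ℕ} [NeZero d]

theorem dicke_apply (u : ZMod d → ℤ) (f : Fin N → ZMod d) :
    dicke d N u f = if content f = u then 1 else 0 := by
  simp only [dicke, content, funext_iff]

theorem sum_smul_dicke_apply (β : (ZMod d → ℤ) →₀ ℂ) (f : Fin N → ZMod d) :
    (β.sum fun u c => c • dicke d N u) f = β (content f) := by
  simp only [Finsupp.sum, Finset.sum_apply, Pi.smul_apply, dicke_apply, smul_eq_mul, mul_ite,
    mul_one, mul_zero]
  exact β.sum_ite_self_eq (content f)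

theorem site_diagonal (m : ZMod d → ℂ) (i : Fin N) :
    site d N (diagonal m) i = diagonal fun f => m (f i) := by
  ext f g
  have hprod : (if f i = g i then (1 : ℂ) else 0) * ∏ j ∈ univ.erase i, (if f j = g j then 1 else 0)
      = if f = g then 1 else 0 := by
    rw [Finset.mul_prod_erase univ (fun j => if f j = g j then (1 : ℂ) else 0) (mem_univ i),
      Finset.prod_boole]
    simp only [mem_univ, forall_const, ← funext_iff]
  rw [site, of_apply, diagonal_apply, ← mul_one (m (f i)), ← mul_ite_zero, mul_assoc, hprod,
    diagonal_apply, mul_ite_zero, mul_one]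

theorem coll_diagonal (m : ZMod d → ℂ) :
    coll d N (diagonal m) = diagonal fun f => ∑ i, m (f i) := by
  ext f g
  simp only [coll, Matrix.sum_apply, site_diagonal, diagonal_apply, sum_ite_irrel, sum_const_zero]

theorem coll_Dmat_mulVec_apply (ℓ : ZMod d) (v : (Fin N → ZMod d) → ℂ) (f : Fin N → ZMod d) :
    (coll d N (Dmat d ℓ) *ᵥ v) f = ((content f ℓ - content f (ℓ + 1) : ℤ) : ℂ) * v f := by
  simp only [Dmat_eq_diagonal, coll_diagonal, mulVec_diagonal, Pi.sub_apply, Pi.single_apply,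
    sum_sub_distrib, sum_boole, content, Int.cast_sub, Int.cast_natCast]

theorem stmt17_general (d N : ℕ) [NeZero d]
    (v : (Fin N → ZMod d) → ℂ) (β : (ZMod d → ℤ) →₀ ℂ)
    (hperm : ∀ π : Equiv.Perm (ZMod d), ∀ u : ZMod d → ℤ, β (u ∘ π) = β u)
    (hv : v = β.sum fun u c => c • dicke d N u)
    (ℓ : ZMod d) :
    qinner d N v (coll d N (Dmat d ℓ) *ᵥ v) = 0 := by
  set τ := Equiv.swap ℓ (ℓ + 1)
  have hcontent (f : Fin N → ZMod d) : content (τ ∘ f) = content f ∘ τ := by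
    rw [content_comp_equiv, Equiv.symm_swap]
  have hv_swap (f : Fin N → ZMod d) : v (τ ∘ f) = v f := by
    rw [hv, sum_smul_dicke_apply, sum_smul_dicke_apply, hcontent, hperm]
  refine Fintype.sum_eq_zero_of_comp_equiv_eq_neg (Equiv.piCongrRight fun _ => τ)
    (fun f => star (v f) * (coll d N (Dmat d ℓ) *ᵥ v) f) fun f => ?_
  change star (v (τ ∘ f)) * (coll d N (Dmat d ℓ) *ᵥ v) (τ ∘ f) = _
  rw [coll_Dmat_mulVec_apply, coll_Dmat_mulVec_apply, hv_swap, hcontent, Function.comp_apply,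
    Function.comp_apply, Equiv.swap_apply_left, Equiv.swap_apply_right]
  push_cast
  ring

theorem stmt17 (d N : ℕ) [NeZero d] (hd : 2 ≤ d) (hN : 1 ≤ N)
    (v : (Fin N → ZMod d) → ℂ) (β : (ZMod d → ℤ) →₀ ℂ)
    (hadm : ∀ u : ZMod d → ℤ, ¬ admissible d N u → β u = 0)
    (hperm : ∀ π : Equiv.Perm (ZMod d), ∀ u : ZMod d → ℤ, β (u ∘ π) = β u)
    (hv : v = β.sum fun u c => c • dicke d N u)
    (ℓ : ZMod d) :
    qinner d N v (coll d N (Dmat d ℓ) *ᵥ v) = 0 :=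
  stmt17_general d N v β hperm hv ℓ
end
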